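/- arXiv:math/0507587 — 2 statements merged into one kernel-verified Lean document; each statement's English description precedes it below -/
import Mathlib

section
/- More generally, a cochain complex 0 → C⁰ → ⋯ → Cⁿ → 0 with dim C^i = k_i and dim H^i = b_i exists if and only if k - b := (k₀-b₀,…,kₙ-bₙ) is admissible (all entries nonnegative, alternating sum zero, all partial alternating sums nonnegative). -/
/-!
Write `r q` for the rank of `d q`. Rank–nullity for `d q` and the definition of `H^q` give
`k q - b q = r q + r (q-1)`, so the alternating partial sums of `k - b` are exactly the ranks
`r i`: they are nonnegative, and the total one is `r n = 0` because `d n` lands in `0`.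
Conversely, the partial sums of an admissible string are realised as ranks by a complex
whose differentials move blocks of coordinates.
-/

open Finset Function Module LinearMap

def altPartialSum (m : ℕ → ℤ) (i : ℕ) : ℤ :=
  ∑ j ∈ range (i + 1), (-1) ^ (i + j) * m j

def IsAdmissible (n : ℕ) (m : ℕ → ℤ) : Prop :=
  (∀ i, 0 ≤ m i) ∧ ∑ i ∈ range (n + 1), (-1) ^ i * m i = 0 ∧ ∀ i < n, 0 ≤ altPartialSum m i

section AltPartialSum

variable (m : ℕ → ℤ)

@[simp]
lemma altPartialSum_zero : altPartialSum m 0 = m 0 := by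
  simp [altPartialSum]

lemma altPartialSum_succ (i : ℕ) :
    altPartialSum m (i + 1) = m (i + 1) - altPartialSum m i := by
  have hsign : ∀ j, (-1 : ℤ) ^ (i + 1 + j) = -(-1) ^ (i + j) := fun j => by
    rw [show i + 1 + j = i + j + 1 by omega, pow_succ, mul_neg_one]
  rw [altPartialSum, sum_range_succ, altPartialSum, ← two_mul, pow_mul, neg_one_sq, one_pow]
  simp only [hsign, neg_mul, sum_neg_distrib]
  ring

lemma altPartialSum_eq_neg_one_pow_mul_sum (n : ℕ) :
    altPartialSum m n = (-1) ^ n * ∑ j ∈ range (n + 1), (-1) ^ j * m j := by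
  simp only [altPartialSum, mul_sum, pow_add, mul_assoc]

variable {m}

lemma altPartialSum_eq_of_eq_add {r : ℕ → ℤ} (h0 : m 0 = r 0)
    (hs : ∀ q, m (q + 1) = r (q + 1) + r q) (i : ℕ) : altPartialSum m i = r i := by
  induction i with
  | zero => simpa using h0
  | succ i ih => rw [altPartialSum_succ, ih, hs]; ring

lemma altPartialSum_eq_zero_of_le {n : ℕ} (hm : ∀ q, n < q → m q = 0)
    (hn : altPartialSum m n = 0) {i : ℕ} (hi : n ≤ i) : altPartialSum m i = 0 := by
  induction i, hi using Nat.le_induction with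
  | base => exact hn
  | succ i hi ih => rw [altPartialSum_succ, ih, hm _ (by omega), sub_zero]

/-- The witness `r` is the sequence of alternating partial sums of `m`. -/
lemma isAdmissible_iff_exists_eq_add {n : ℕ} (hm : ∀ q, n < q → m q = 0) :
    IsAdmissible n m ↔
      ∃ r : ℕ → ℕ, r n = 0 ∧ m 0 = r 0 ∧ ∀ q, m (q + 1) = r (q + 1) + r q := by
  constructor
  · rintro ⟨-, htotal, hpartial⟩
    have hn : altPartialSum m n = 0 := by
      rw [altPartialSum_eq_neg_one_pow_mul_sum, htotal, mul_zero]
    have hnonneg : ∀ i, 0 ≤ altPartialSum m i := fun i => by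
      rcases lt_or_ge i n with hi | hi
      · exact hpartial i hi
      · exact (altPartialSum_eq_zero_of_le hm hn hi).ge
    refine ⟨fun i => (altPartialSum m i).toNat, by simp [hn], ?_, fun q => ?_⟩ <;> beta_reduce
    · rw [Int.toNat_of_nonneg (hnonneg 0), altPartialSum_zero]
    · rw [Int.toNat_of_nonneg (hnonneg _), Int.toNat_of_nonneg (hnonneg _), altPartialSum_succ]
      ring
  · rintro ⟨r, hrn, h0, hs⟩
    have hS := altPartialSum_eq_of_eq_add (r := fun i => (r i : ℤ)) h0 hs
    refine ⟨fun i => ?_, ?_, fun i _ => by simp [hS]⟩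
    · cases i with
      | zero => omega
      | succ q => have := hs q; omega
    · have := altPartialSum_eq_neg_one_pow_mul_sum m n
      rw [hS, hrn, Nat.cast_zero, zero_eq_mul] at this
      exact this.resolve_left (pow_ne_zero _ (by norm_num))

end AltPartialSum

section Complex

variable {K U V W : Type*} [Field K] [AddCommGroup U] [Module K U] [AddCommGroup V] [Module K V]
  [AddCommGroup W] [Module K W] [FiniteDimensional K V]

lemma finrank_homology_add_finrank_range {f : U →ₗ[K] V} {g : V →ₗ[K] W} (hgf : g ∘ₗ f = 0) :
    finrank K (ker g ⧸ (range f).comap (ker g).subtype) + finrank K (range f) =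
      finrank K (ker g) := by
  rw [← (Submodule.comapSubtypeEquivOfLe (range_le_ker_iff.mpr hgf)).finrank_eq]
  exact Submodule.finrank_quotient_add_finrank _

lemma finrank_eq_finrank_homology_add_finrank_range_add {f : U →ₗ[K] V} {g : V →ₗ[K] W}
    (hgf : g ∘ₗ f = 0) :
    finrank K V = finrank K (ker g ⧸ (range f).comap (ker g).subtype) + finrank K (range f) +
      finrank K (range g) := by
  rw [finrank_homology_add_finrank_range hgf, add_comm, finrank_range_add_finrank_ker]

end Complex

section Window

variable (K : Type*) [Field K] {a m : ℕ}

def windowEmb (s : ℕ) (h : s + m ≤ a) : Fin m → Fin a := fun i => ⟨s + i, by omega⟩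

lemma windowEmb_injective (s : ℕ) (h : s + m ≤ a) : Injective (windowEmb s h) :=
  fun i j hij => Fin.ext (by simpa [windowEmb] using hij)

noncomputable def windowProj (s : ℕ) (h : s + m ≤ a) : (Fin a → K) →ₗ[K] (Fin m → K) :=
  funLeft K K (windowEmb s h)

noncomputable def windowIncl (s : ℕ) (h : s + m ≤ a) : (Fin m → K) →ₗ[K] (Fin a → K) :=
  ExtendByZero.linearMap K (windowEmb s h)

lemma windowProj_surjective (s : ℕ) (h : s + m ≤ a) : Surjective (windowProj K s h) :=
  funLeft_surjective_of_injective K K _ (windowEmb_injective s h)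

lemma windowIncl_injective (s : ℕ) (h : s + m ≤ a) : Injective (windowIncl K s h) := by
  intro x y hxy
  funext i
  simpa [windowIncl, (windowEmb_injective s h).extend_apply] using
    congrFun hxy (windowEmb s h i)

lemma windowProj_comp_windowIncl {m' : ℕ} {s s' : ℕ} (h : s + m ≤ a) (h' : s' + m' ≤ a)
    (hdisj : s' + m' ≤ s) : windowProj K s' h' ∘ₗ windowIncl K s h = 0 := by
  ext x i
  simp only [windowProj, windowIncl, coe_comp, comp_apply, funLeft_apply,
    ExtendByZero.linearMap_apply, LinearMap.zero_apply]
  refine extend_apply' _ _ _ fun ⟨j, hj⟩ => ?_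
  have := congrArg Fin.val hj
  simp only [windowEmb] at this
  omega

lemma finrank_range_windowIncl_comp_windowProj {a' s s' : ℕ} (h : s + m ≤ a) (h' : s' + m ≤ a') :
    finrank K (range (windowIncl K s' h' ∘ₗ windowProj K s h)) = m := by
  rw [range_comp, range_eq_top.mpr (windowProj_surjective K s h), Submodule.map_top,
    finrank_range_of_inj (windowIncl_injective K s' h'), finrank_fin_fun]

end Window

/-- The complex realising the ranks `r`: `d q` carries the coordinates `b q, …, b q + r q - 1`
of `K^{k q}` onto the last `r q` coordinates of `K^{k (q+1)}`, which lie after those carried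
on by `d (q+1)`. -/
theorem exists_complex_of_eq_add (K : Type*) [Field K] {k b r : ℕ → ℕ}
    (h0 : k 0 = b 0 + r 0) (hs : ∀ q, k (q + 1) = b (q + 1) + r (q + 1) + r q) :
    ∃ d : ∀ q : ℕ, ((Fin (k q) → K) →ₗ[K] (Fin (k (q + 1)) → K)),
      (∀ q, (d (q + 1)).comp (d q) = 0) ∧
      b 0 = finrank K ↥(ker (d 0)) ∧
      (∀ q, b (q + 1) = finrank K
        (↥(ker (d (q + 1))) ⧸ (range (d q)).comap (ker (d (q + 1))).subtype)) := by
  have hle : ∀ q, b q + r q ≤ k q := fun q => by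
    cases q with
    | zero => omega
    | succ q => have := hs q; omega
  let d q := windowIncl K _ (hs q).ge ∘ₗ windowProj K _ (hle q)
  have hdd : ∀ q, d (q + 1) ∘ₗ d q = 0 := fun q => by
    simp only [d]
    rw [LinearMap.comp_assoc, ← LinearMap.comp_assoc _ _ (windowProj K _ (hle (q + 1))),
      windowProj_comp_windowIncl K _ _ le_rfl, zero_comp, comp_zero]
  have hrank q : finrank K (range (d q)) = r q := finrank_range_windowIncl_comp_windowProj K _ _
  refine ⟨d, hdd, ?_, fun q => ?_⟩
  · have := finrank_range_add_finrank_ker (d 0)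
    rw [hrank, finrank_fin_fun] at this
    omega
  · have := finrank_eq_finrank_homology_add_finrank_range_add (hdd q)
    rw [finrank_fin_fun, hrank, hrank] at this
    have := hs q
    omega

/-- A cochain complex `0 → ℂ^{k₀} → ⋯ → ℂ^{kₙ} → 0` with
`dim H^i = b i` exists iff `k - b` is admissible: all entries nonnegative
(`b i ≤ k i`), vanishing total alternating sum, and nonnegative partial
alternating sums. -/
theorem statement3
    (n : ℕ) (k b : ℕ → ℕ) (hkn : ∀ q, n < q → k q = 0) (hbn : ∀ q, n < q → b q = 0) :
    (∃ d : ∀ q : ℕ, ((Fin (k q) → ℂ) →ₗ[ℂ] (Fin (k (q+1)) → ℂ)),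
        (∀ q, (d (q+1)).comp (d q) = 0) ∧
        b 0 = Module.finrank ℂ ↥(LinearMap.ker (d 0)) ∧
        (∀ q, b (q+1) = Module.finrank ℂ
          (↥(LinearMap.ker (d (q+1))) ⧸
            (LinearMap.range (d q)).comap (LinearMap.ker (d (q+1))).subtype)))
    ↔ ((∀ i, b i ≤ k i) ∧
        (∑ i ∈ Finset.range (n+1), (-1:ℤ)^i * ((k i : ℤ) - (b i : ℤ)) = 0) ∧
        ∀ i < n, 0 ≤ ∑ j ∈ Finset.range (i+1), (-1:ℤ)^(i+j) * ((k j : ℤ) - (b j : ℤ))) := by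
  have hadm := isAdmissible_iff_exists_eq_add (n := n) (m := fun i => (k i : ℤ) - b i)
    fun q hq => by simp [hkn q hq, hbn q hq]
  simp only [IsAdmissible, altPartialSum, sub_nonneg, Nat.cast_le] at hadm
  rw [hadm]
  constructor
  · rintro ⟨d, hdd, hb0, hbs⟩
    refine ⟨fun q => finrank ℂ (range (d q)), ?_, ?_, fun q => ?_⟩ <;> beta_reduce
    · have := (range (d n)).finrank_le
      rw [finrank_fin_fun] at this
      have := hkn (n + 1) n.lt_succ_self
      omega
    · have := finrank_range_add_finrank_ker (d 0)
      rw [finrank_fin_fun] at this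
      omega
    · have := finrank_eq_finrank_homology_add_finrank_range_add (hdd q)
      rw [finrank_fin_fun, ← hbs] at this
      omega
  · rintro ⟨r, -, h0, hs⟩
    exact exists_complex_of_eq_add ℂ (r := r) (by omega) fun q => by have := hs q; omega
end

section
/- Multiplicativity of torsion in short exact sequences of acyclic complexes: if 0 → C' → C → C'' → 0 is a short exact sequence of finite acyclic cochain complexes over ℂ that is degreewise split compatibly with chosen bases, then τ(C) = ± τ(C')·τ(C''). -/
/-!
Compute the torsion of `C` with bases adapted to the sequence: in degree `i` the image basis
consists of the `β'_i` placed in the first summand together with the vectors `d (0, γ''_{i-1})`,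
which project onto `β''_i`, and the lifts are the `γ'_i` and `γ''_i` placed in the two summands.
With rows split as `C'^i ⊕ C''^i` and columns reordered, this torsion matrix is block upper
triangular with the torsion matrices of `C'` and `C''` on the diagonal, so every degree contributes
`± det' · det''`. The torsion of an acyclic complex does not depend on the admissible choice:
replacing the image bases multiplies the degree-`i` determinant by `det Aᵢ · det Aᵢ₊₁`
(a block-triangular change of basis), and these factors cancel in the alternating product.
-/

namespace MilnorTorsion

open Finset

lemma prod_range_mul_succ_zpow_neg_one_pow {G₀ : Type*} [CommGroupWithZero G₀] {a : ℕ → G₀}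
    (ha : ∀ i, a i ≠ 0) (m : ℕ) :
    ∏ i ∈ range m, (a i * a (i + 1)) ^ ((-1 : ℤ) ^ i) = a 0 * a m ^ (-(-1 : ℤ) ^ m) := by
  refine prod_range_induction _ (fun m => a 0 * a m ^ (-(-1 : ℤ) ^ m))
    (by rw [pow_zero, zpow_neg_one, mul_inv_cancel₀ (ha 0)]) m fun i _ => ?_
  rw [pow_succ, mul_neg_one, neg_neg, mul_zpow, mul_assoc, ← mul_assoc (a i ^ _),
    ← zpow_add₀ (ha i), neg_add_cancel, zpow_zero, one_mul]

lemma exists_sign_prod_zpow {𝕜 : Type*} [Field 𝕜] (s : Finset ℕ) (z : ℕ → ℤ) {a b c : ℕ → 𝕜}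
    (h : ∀ i, ∃ ε : 𝕜, (ε = 1 ∨ ε = -1) ∧ a i = ε * (b i * c i)) :
    ∃ ε : 𝕜, (ε = 1 ∨ ε = -1) ∧
      ∏ i ∈ s, a i ^ z i = ε * (∏ i ∈ s, b i ^ z i) * ∏ i ∈ s, c i ^ z i := by
  choose ε hε habc using h
  have hε_zpow : ∀ i, ε i ^ z i = 1 ∨ ε i ^ z i = -1 := fun i => by
    rcases hε i with h | h <;> rw [h]
    · exact .inl (one_zpow _)
    · rcases (z i).even_or_odd with he | ho
      exacts [.inl (by rw [he.neg_zpow, one_zpow]), .inr (by rw [ho.neg_zpow, one_zpow])]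
  refine ⟨∏ i ∈ s, ε i ^ z i, prod_induction _ (fun x => x = 1 ∨ x = -1)
    (by rintro x y (rfl | rfl) (rfl | rfl) <;> simp) (.inl rfl) fun i _ => hε_zpow i, ?_⟩
  simp only [habc, mul_zpow, prod_mul_distrib, mul_assoc]

lemma det_submatrix_equiv {R ι κ : Type*} [CommRing R] [Fintype ι] [DecidableEq ι]
    [Fintype κ] [DecidableEq κ] (M : Matrix κ κ R) (e₁ e₂ : ι ≃ κ) :
    (M.submatrix e₁ e₂).det = Equiv.Perm.sign (e₂.trans e₁.symm) * M.det := by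
  have : M.submatrix e₁ e₂ = (M.submatrix e₁ e₁).submatrix id (e₂.trans e₁.symm) := by
    ext; simp
  rw [this, Matrix.det_permute', Matrix.det_submatrix_equiv_self]

lemma det_ne_zero_of_linearIndependent {K ι M : Type*} [Field K] [Fintype ι] [DecidableEq ι]
    [AddCommGroup M] [Module K M] {v w : ι → M} {A : Matrix ι ι K}
    (hw : LinearIndependent K w) (hwv : ∀ j, w j = ∑ x, A x j • v x) : A.det ≠ 0 := by
  have hA : LinearIndependent K A.col := by
    refine LinearIndependent.of_comp (Fintype.linearCombination K v) ?_
    convert hw using 1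
    funext j; exact (hwv j).symm
  exact ((Matrix.isUnit_iff_isUnit_det A).mp
    (Matrix.linearIndependent_cols_iff_isUnit.mp hA)).ne_zero

lemma _root_.LinearIndependent.sum_elim_of_map_eq_zero {R M N ι κ : Type*} [Ring R]
    [AddCommGroup M] [Module R M] [AddCommGroup N] [Module R N] {u : ι → M} {v : κ → M}
    (f : M →ₗ[R] N) (hu : LinearIndependent R u) (hv : LinearIndependent R (f ∘ v))
    (hfu : ∀ i, f (u i) = 0) :
    LinearIndependent R (Sum.elim u v) :=
  hu.sum_type (hv.of_comp f) <| (Submodule.range_ker_disjoint hv).symm.mono_left <|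
    Submodule.span_le.mpr <| Set.range_subset_iff.mpr hfu

lemma span_eq_range_of_linearIndependent {K V W ι : Type*} [Field K] [AddCommGroup V]
    [Module K V] [AddCommGroup W] [Module K W] [FiniteDimensional K W] [Fintype ι]
    (f : V →ₗ[K] W) {v : ι → W} {w : ι → V} (hv : LinearIndependent K v)
    (hvw : ∀ j, f (w j) = v j) (hcard : Module.finrank K (LinearMap.range f) = Fintype.card ι) :
    Submodule.span K (Set.range v) = LinearMap.range f := by
  refine Submodule.eq_of_le_of_finrank_eq
    (Submodule.span_le.mpr <| Set.range_subset_iff.mpr fun j => ⟨w j, hvw j⟩) ?_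
  rw [finrank_span_eq_card hv, hcard]

lemma det_eq_one_of_card_eq_zero {𝕜 : Type*} [CommRing 𝕜] {m : ℕ} (hm : m = 0)
    (A : Matrix (Fin m) (Fin m) 𝕜) : A.det = 1 := by
  subst hm; exact Matrix.det_isEmpty

def finSplit {N R R₂ : ℕ} (h : N = R + R₂) : Fin N ≃ Fin R ⊕ Fin R₂ :=
  (finCongr h).trans finSumFinEquiv.symm

section TorsionMatrix

variable {𝕜 : Type*} {N R R₂ : ℕ}

def torsionMatrix (h : N = R + R₂) (β : Fin R → Fin N → 𝕜) (γ : Fin R₂ → Fin N → 𝕜) :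
    Matrix (Fin N) (Fin N) 𝕜 :=
  Matrix.of fun a b => Sum.elim (fun j => β j a) (fun j => γ j a)
    (finSumFinEquiv.symm (finCongr h b))

lemma torsionMatrix_eq_submatrix (h : N = R + R₂) (β : Fin R → Fin N → 𝕜)
    (γ : Fin R₂ → Fin N → 𝕜) :
    torsionMatrix h β γ =
      (Matrix.of fun a c => Sum.elim (fun j => β j a) (fun j => γ j a) c).submatrix id
        (finSplit h) :=
  rfl

lemma det_torsionMatrix_of_triangular_change [CommRing 𝕜] (h : N = R + R₂)
    {β β₂ : Fin R → Fin N → 𝕜} {γ γ₂ : Fin R₂ → Fin N → 𝕜} (A : Matrix (Fin R) (Fin R) 𝕜)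
    (B : Matrix (Fin R) (Fin R₂) 𝕜) (A' : Matrix (Fin R₂) (Fin R₂) 𝕜)
    (hβ : ∀ j, β₂ j = ∑ x, A x j • β x)
    (hγ : ∀ j, γ₂ j = ∑ x, B x j • β x + ∑ x, A' x j • γ x) :
    (torsionMatrix h β₂ γ₂).det = (torsionMatrix h β γ).det * (A.det * A'.det) := by
  have hcols : (Matrix.of fun a c => Sum.elim (fun j => β₂ j a) (fun j => γ₂ j a) c) =
      (Matrix.of fun a c => Sum.elim (fun j => β j a) (fun j => γ j a) c) *
        Matrix.fromBlocks A B 0 A' := by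
    ext a (j | j) <;>
      simp [Matrix.mul_apply, Fintype.sum_sum_type, hβ, hγ, Finset.sum_apply, mul_comm]
  rw [torsionMatrix_eq_submatrix, torsionMatrix_eq_submatrix, hcols,
    Matrix.submatrix_mul _ _ _ _ _ (finSplit h).bijective, Matrix.det_mul,
    Matrix.det_submatrix_equiv_self, Matrix.det_fromBlocks_zero₂₁]

end TorsionMatrix

def torsion {𝕜 : Type*} [Field 𝕜] (n : ℕ) {k r : ℕ → ℕ} (hkr : ∀ i, k i = r i + r (i + 1))
    (β : ∀ i, Fin (r i) → Fin (k i) → 𝕜) (γ : ∀ i, Fin (r (i + 1)) → Fin (k i) → 𝕜) : 𝕜 :=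
  ∏ i ∈ range (n + 1), (torsionMatrix (hkr i) (β i) (γ i)).det ^ ((-1 : ℤ) ^ i)

section AcyclicComplex

variable {𝕜 : Type*} [Field 𝕜] {k r : ℕ → ℕ}
  (d : ∀ q, (Fin (k q) → 𝕜) →ₗ[𝕜] (Fin (k (q + 1)) → 𝕜))
  (hex0 : LinearMap.ker (d 0) = ⊥) (hex : ∀ q, LinearMap.ker (d (q + 1)) = LinearMap.range (d q))

include hex0 hex

lemma finrank_range_eq (hr0 : r 0 = 0) (hkr : ∀ i, k i = r i + r (i + 1)) (i : ℕ) :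
    Module.finrank 𝕜 (LinearMap.range (d i)) = r (i + 1) := by
  induction i with
  | zero =>
    have hrank := LinearMap.finrank_range_add_finrank_ker (d 0)
    rw [hex0, finrank_bot, Module.finrank_fin_fun] at hrank
    grind
  | succ m ih =>
    have hrank := LinearMap.finrank_range_add_finrank_ker (d (m + 1))
    rw [hex m, ih, Module.finrank_fin_fun] at hrank
    grind

lemma mem_span_of_map_eq_zero {β : ∀ i, Fin (r i) → Fin (k i) → 𝕜}
    (hsp : ∀ i, Submodule.span 𝕜 (Set.range (β (i + 1))) = LinearMap.range (d i))
    {i : ℕ} {v : Fin (k i) → 𝕜} (hv : d i v = 0) : v ∈ Submodule.span 𝕜 (Set.range (β i)) := by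
  cases i with
  | zero =>
    rw [← LinearMap.mem_ker, hex0, Submodule.mem_bot] at hv
    exact hv ▸ Submodule.zero_mem _
  | succ m => rwa [hsp, ← hex, LinearMap.mem_ker]

theorem torsion_eq_of_admissible (n : ℕ) (hr0 : r 0 = 0) (hrn : r (n + 1) = 0)
    (hkr : ∀ i, k i = r i + r (i + 1)) {β β₂ : ∀ i, Fin (r i) → Fin (k i) → 𝕜}
    {γ γ₂ : ∀ i, Fin (r (i + 1)) → Fin (k i) → 𝕜} (hli₂ : ∀ i, LinearIndependent 𝕜 (β₂ i))
    (hsp : ∀ i, Submodule.span 𝕜 (Set.range (β (i + 1))) = LinearMap.range (d i))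
    (hsp₂ : ∀ i, Submodule.span 𝕜 (Set.range (β₂ (i + 1))) = LinearMap.range (d i))
    (hγ : ∀ i j, d i (γ i j) = β (i + 1) j) (hγ₂ : ∀ i j, d i (γ₂ i j) = β₂ (i + 1) j) :
    torsion n hkr β₂ γ₂ = torsion n hkr β γ := by
  have hβ₂_mem : ∀ i j, β₂ i j ∈ Submodule.span 𝕜 (Set.range (β i)) := by
    rintro (_ | m) j
    · exact (Fin.cast hr0 j).elim0
    · rw [hsp, ← hsp₂]; exact Submodule.subset_span ⟨j, rfl⟩
  choose A hA using fun i j => (Submodule.mem_span_range_iff_exists_fun 𝕜).mp (hβ₂_mem i j)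
  have hγ₂_mem : ∀ i j, γ₂ i j - ∑ x, A (i + 1) j x • γ i x ∈
      Submodule.span 𝕜 (Set.range (β i)) := fun i j =>
    mem_span_of_map_eq_zero d hex0 hex hsp (by simp [map_sum, hγ, hγ₂, hA])
  choose B hB using fun i j => (Submodule.mem_span_range_iff_exists_fun 𝕜).mp (hγ₂_mem i j)
  let M i : Matrix (Fin (r i)) (Fin (r i)) 𝕜 := Matrix.of fun x j => A i j x
  have hdet : ∀ i, (torsionMatrix (hkr i) (β₂ i) (γ₂ i)).det =
      (torsionMatrix (hkr i) (β i) (γ i)).det * ((M i).det * (M (i + 1)).det) := fun i =>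
    det_torsionMatrix_of_triangular_change _ (M i) (Matrix.of fun x j => B i j x) (M (i + 1))
      (fun j => (hA i j).symm) (fun j => by simp [M, hB i j])
  have hM : ∀ i, (M i).det ≠ 0 := fun i =>
    det_ne_zero_of_linearIndependent (hli₂ i) fun j => (hA i j).symm
  simp only [torsion, hdet]
  rw [prod_congr rfl fun i _ => mul_zpow _ _ _, prod_mul_distrib,
    prod_range_mul_succ_zpow_neg_one_pow hM, det_eq_one_of_card_eq_zero hr0,
    det_eq_one_of_card_eq_zero hrn, one_zpow, mul_one, mul_one]

end AcyclicComplex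

section BlockVectors

variable {𝕜 : Type*} {a b : ℕ}

def embedLeft [Zero 𝕜] (u : Fin a → 𝕜) : Fin (a + b) → 𝕜 :=
  fun x => Sum.elim u 0 (finSumFinEquiv.symm x)

def embedRight [Zero 𝕜] (w : Fin b → 𝕜) : Fin (a + b) → 𝕜 :=
  fun x => Sum.elim 0 w (finSumFinEquiv.symm x)

variable [Zero 𝕜]

@[simp] lemma embedLeft_apply_left (u : Fin a → 𝕜) (x : Fin a) :
    embedLeft (b := b) u (Fin.castAdd b x) = u x := by simp [embedLeft]

@[simp] lemma embedLeft_apply_right (u : Fin a → 𝕜) (y : Fin b) :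
    embedLeft u (Fin.natAdd a y) = 0 := by simp [embedLeft]

@[simp] lemma embedRight_apply_left (w : Fin b → 𝕜) (x : Fin a) :
    embedRight w (Fin.castAdd b x) = 0 := by simp [embedRight]

@[simp] lemma embedRight_apply_right (w : Fin b → 𝕜) (y : Fin b) :
    embedRight (a := a) w (Fin.natAdd a y) = w y := by simp [embedRight]

end BlockVectors

section BlockProjections

variable {𝕜 : Type*} [Semiring 𝕜] {a b : ℕ}

variable (a b) in
def projLeft : (Fin (a + b) → 𝕜) →ₗ[𝕜] (Fin a → 𝕜) :=
  LinearMap.funLeft 𝕜 𝕜 fun x => finSumFinEquiv (.inl x)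

variable (a b) in
def projRight : (Fin (a + b) → 𝕜) →ₗ[𝕜] (Fin b → 𝕜) :=
  LinearMap.funLeft 𝕜 𝕜 fun y => finSumFinEquiv (.inr y)

@[simp] lemma projRight_apply (v : Fin (a + b) → 𝕜) (y : Fin b) :
    projRight a b v y = v (Fin.natAdd a y) := by
  simp [projRight]

@[simp] lemma projLeft_embedLeft (u : Fin a → 𝕜) : projLeft a b (embedLeft u) = u := by
  ext; simp [projLeft]

@[simp] lemma projRight_embedLeft (u : Fin a → 𝕜) : projRight a b (embedLeft u) = 0 := by
  ext; simp [projRight]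

@[simp] lemma projRight_embedRight (w : Fin b → 𝕜) : projRight a b (embedRight w) = w := by
  ext; simp [projRight]

end BlockProjections

section Splice

variable {𝕜 : Type*} [Field 𝕜]

lemma det_torsionMatrix_splice {K₁ K₂ R₁ R₁' R₂ R₂' S S' : ℕ} (h₁ : K₁ = R₁ + R₁')
    (h₂ : K₂ = R₂ + R₂') (h : K₁ + K₂ = S + S') (hs : S = R₁ + R₂) (hs' : S' = R₁' + R₂')
    {β₁ : Fin R₁ → Fin K₁ → 𝕜} {γ₁ : Fin R₁' → Fin K₁ → 𝕜} {β₂ : Fin R₂ → Fin K₂ → 𝕜}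
    {γ₂ : Fin R₂' → Fin K₂ → 𝕜} {L : Fin R₂ → Fin (K₁ + K₂) → 𝕜}
    (hL : ∀ j, projRight K₁ K₂ (L j) = β₂ j) :
    ∃ ε : 𝕜, (ε = 1 ∨ ε = -1) ∧
      (torsionMatrix h (Sum.elim (fun j => embedLeft (β₁ j)) L ∘ finSplit hs)
          (Sum.elim (fun j => embedLeft (γ₁ j)) (fun j => embedRight (γ₂ j)) ∘
            finSplit hs')).det =
        ε * ((torsionMatrix h₁ β₁ γ₁).det * (torsionMatrix h₂ β₂ γ₂).det) := by
  let V := Sum.elim (Sum.elim (fun j => embedLeft (β₁ j)) L)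
    (Sum.elim (fun j => embedLeft (γ₁ j)) (fun j => embedRight (γ₂ j)))
  let X : Matrix (Fin (K₁ + K₂)) _ 𝕜 := Matrix.of fun a c => V c a
  let σ := (finSplit h).trans (Equiv.sumCongr (finSplit hs) (finSplit hs'))
  let τ := (Equiv.sumCongr (finSplit h₁) (finSplit h₂)).trans
    (Equiv.sumSumSumComm (Fin R₁) (Fin R₁') (Fin R₂) (Fin R₂'))
  have hσ : torsionMatrix h (Sum.elim (fun j => embedLeft (β₁ j)) L ∘ finSplit hs)
      (Sum.elim (fun j => embedLeft (γ₁ j)) (fun j => embedRight (γ₂ j)) ∘ finSplit hs') =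
      X.submatrix id σ := by
    ext a b
    simp only [torsionMatrix, Matrix.of_apply, Matrix.submatrix_apply, X, σ, Equiv.trans_apply,
      finSplit]
    rcases finSumFinEquiv.symm (finCongr h b) with c | c <;> rfl
  -- Rows split as `Fin K₁ ⊕ Fin K₂`, columns as `(β₁, γ₁ | L, γ₂)`; the lower left block
  -- vanishes because the `embedLeft` columns are zero on the second summand.
  have hτ : X.submatrix finSumFinEquiv τ = Matrix.fromBlocks (torsionMatrix h₁ β₁ γ₁)
      (Matrix.of fun x c => X (finSumFinEquiv (.inl x)) (τ (.inr c))) 0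
      (torsionMatrix h₂ β₂ γ₂) := by
    ext (x | x) (c | c)
    all_goals simp only [Matrix.submatrix_apply, Matrix.fromBlocks_apply₁₁,
      Matrix.fromBlocks_apply₁₂, Matrix.fromBlocks_apply₂₁, Matrix.fromBlocks_apply₂₂,
      Matrix.zero_apply, Matrix.of_apply, torsionMatrix, τ, finSplit, Equiv.trans_apply,
      Equiv.sumCongr_apply, Sum.map_inl, Sum.map_inr]
    · rcases finSumFinEquiv.symm (finCongr h₁ c) with j | j <;> simp [X, V]
    · rcases finSumFinEquiv.symm (finCongr h₁ c) with j | j <;> simp [X, V]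
    · rcases finSumFinEquiv.symm (finCongr h₂ c) with j | j
      · simp [X, V, ← hL j]
      · simp [X, V]
  have hστ : X.submatrix id σ =
      (X.submatrix finSumFinEquiv τ).submatrix finSumFinEquiv.symm (σ.trans τ.symm) := by
    ext; simp
  rw [hσ, hστ, det_submatrix_equiv, hτ, Matrix.det_fromBlocks_zero₂₁]
  refine ⟨_, ?_, rfl⟩
  rcases Int.units_eq_one_or (Equiv.Perm.sign ((σ.trans τ.symm).trans finSumFinEquiv)) with
    hsign | hsign <;> simp [hsign]

end Splice

section SplitExactSequence

variable {𝕜 : Type*} [Field 𝕜] {k' k'' r r' r'' : ℕ → ℕ}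
  {d' : ∀ q, (Fin (k' q) → 𝕜) →ₗ[𝕜] (Fin (k' (q + 1)) → 𝕜)}
  {d'' : ∀ q, (Fin (k'' q) → 𝕜) →ₗ[𝕜] (Fin (k'' (q + 1)) → 𝕜)}
  (d : ∀ q, (Fin (k' q + k'' q) → 𝕜) →ₗ[𝕜] (Fin (k' (q + 1) + k'' (q + 1)) → 𝕜))

def liftedImage (γ'' : ∀ i, Fin (r'' (i + 1)) → Fin (k'' i) → 𝕜) :
    ∀ i, Fin (r'' i) → Fin (k' i + k'' i) → 𝕜
  | 0, _ => 0 -- `r'' 0 = 0` in every application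
  | m + 1, j => d m (embedRight (γ'' m j))

def splicedImage (hrr : ∀ i, r i = r' i + r'' i) (β' : ∀ i, Fin (r' i) → Fin (k' i) → 𝕜)
    (L : ∀ i, Fin (r'' i) → Fin (k' i + k'' i) → 𝕜) (i : ℕ) :
    Fin (r i) → Fin (k' i + k'' i) → 𝕜 :=
  Sum.elim (fun j => embedLeft (β' i j)) (L i) ∘ finSplit (hrr i)

def splicedLift (hrr : ∀ i, r i = r' i + r'' i) (γ' : ∀ i, Fin (r' (i + 1)) → Fin (k' i) → 𝕜)
    (γ'' : ∀ i, Fin (r'' (i + 1)) → Fin (k'' i) → 𝕜) (i : ℕ) :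
    Fin (r (i + 1)) → Fin (k' i + k'' i) → 𝕜 :=
  Sum.elim (fun j => embedLeft (γ' i j)) (fun j => embedRight (γ'' i j)) ∘ finSplit (hrr (i + 1))

lemma projRight_liftedImage
    (hquot : ∀ q w, projRight (k' (q + 1)) (k'' (q + 1)) (d q w) = d'' q (projRight _ _ w))
    (hr0'' : r'' 0 = 0) {β'' : ∀ i, Fin (r'' i) → Fin (k'' i) → 𝕜}
    {γ'' : ∀ i, Fin (r'' (i + 1)) → Fin (k'' i) → 𝕜}
    (hγ'' : ∀ i j, d'' i (γ'' i j) = β'' (i + 1) j) (i : ℕ) (j : Fin (r'' i)) :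
    projRight (k' i) (k'' i) (liftedImage d γ'' i j) = β'' i j := by
  cases i with
  | zero => exact (Fin.cast hr0'' j).elim0
  | succ m => simp [liftedImage, hquot, hγ'']

lemma linearIndependent_splicedImage (hrr : ∀ i, r i = r' i + r'' i)
    {β' : ∀ i, Fin (r' i) → Fin (k' i) → 𝕜} {β'' : ∀ i, Fin (r'' i) → Fin (k'' i) → 𝕜}
    {L : ∀ i, Fin (r'' i) → Fin (k' i + k'' i) → 𝕜} {i : ℕ} (hβ' : LinearIndependent 𝕜 (β' i))
    (hβ'' : LinearIndependent 𝕜 (β'' i))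
    (hL : ∀ j, projRight (k' i) (k'' i) (L i j) = β'' i j) :
    LinearIndependent 𝕜 (splicedImage hrr β' L i) := by
  have hleft : LinearIndependent 𝕜 fun j => embedLeft (b := k'' i) (β' i j) :=
    .of_comp (projLeft _ _) (by simpa [Function.comp_def] using hβ')
  have hright : LinearIndependent 𝕜 (projRight (k' i) (k'' i) ∘ L i) := by
    simpa [Function.comp_def, hL] using hβ''
  exact (hleft.sum_elim_of_map_eq_zero _ hright fun j => projRight_embedLeft _).comp _
    (finSplit (hrr i)).injective

lemma map_splicedLift (hsub : ∀ q u, d q (embedLeft u) = embedLeft (d' q u))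
    (hrr : ∀ i, r i = r' i + r'' i) {β' : ∀ i, Fin (r' i) → Fin (k' i) → 𝕜}
    {γ' : ∀ i, Fin (r' (i + 1)) → Fin (k' i) → 𝕜} (hγ' : ∀ i j, d' i (γ' i j) = β' (i + 1) j)
    (γ'' : ∀ i, Fin (r'' (i + 1)) → Fin (k'' i) → 𝕜) (i : ℕ) (j : Fin (r (i + 1))) :
    d i (splicedLift hrr γ' γ'' i j) = splicedImage hrr β' (liftedImage d γ'') (i + 1) j := by
  simp only [splicedLift, splicedImage, Function.comp_apply]
  rcases finSplit (hrr (i + 1)) j with j | j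
  · simp [hsub, hγ']
  · rfl

end SplitExactSequence

end MilnorTorsion

open MilnorTorsion

theorem statement16_general
    (n : ℕ) (k' k'' r r' r'' : ℕ → ℕ)
    (hk'n : ∀ q, n < q → k' q = 0) (hk''n : ∀ q, n < q → k'' q = 0)
    (d' : ∀ q : ℕ, ((Fin (k' q) → ℂ) →ₗ[ℂ] (Fin (k' (q+1)) → ℂ)))
    (d'' : ∀ q : ℕ, ((Fin (k'' q) → ℂ) →ₗ[ℂ] (Fin (k'' (q+1)) → ℂ)))
    (d : ∀ q : ℕ, ((Fin (k' q + k'' q) → ℂ) →ₗ[ℂ] (Fin (k' (q+1) + k'' (q+1)) → ℂ)))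
    (hex0 : LinearMap.ker (d 0) = ⊥)
    (hex : ∀ q, LinearMap.ker (d (q+1)) = LinearMap.range (d q))
    (hsub : ∀ q (u : Fin (k' q) → ℂ),
      d q (fun x => Sum.elim u 0 (finSumFinEquiv.symm x))
        = fun x => Sum.elim (d' q u) 0 (finSumFinEquiv.symm x))
    (hquot : ∀ q (w : Fin (k' q + k'' q) → ℂ) (a : Fin (k'' (q+1))),
      d q w (finSumFinEquiv (Sum.inr a))
        = d'' q (fun x => w (finSumFinEquiv (Sum.inr x))) a)
    (hr0' : r' 0 = 0) (hkr' : ∀ i, k' i = r' i + r' (i+1))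
    (hr0'' : r'' 0 = 0) (hkr'' : ∀ i, k'' i = r'' i + r'' (i+1))
    (hr0 : r 0 = 0) (hkr : ∀ i, k' i + k'' i = r i + r (i+1))
    (β' : ∀ i, Fin (r' i) → (Fin (k' i) → ℂ))
    (γ' : ∀ i, Fin (r' (i+1)) → (Fin (k' i) → ℂ))
    (β'' : ∀ i, Fin (r'' i) → (Fin (k'' i) → ℂ))
    (γ'' : ∀ i, Fin (r'' (i+1)) → (Fin (k'' i) → ℂ))
    (β : ∀ i, Fin (r i) → (Fin (k' i + k'' i) → ℂ))
    (γ : ∀ i, Fin (r (i+1)) → (Fin (k' i + k'' i) → ℂ))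
    (hβli' : ∀ i, LinearIndependent ℂ (β' i))
    (hβli'' : ∀ i, LinearIndependent ℂ (β'' i))
    (hβli : ∀ i, LinearIndependent ℂ (β i))
    (hβ : ∀ i, Submodule.span ℂ (Set.range (β (i+1))) = LinearMap.range (d i))
    (hγ' : ∀ i j, d' i (γ' i j) = β' (i+1) j)
    (hγ'' : ∀ i j, d'' i (γ'' i j) = β'' (i+1) j)
    (hγ : ∀ i j, d i (γ i j) = β (i+1) j) :
    ∃ s : ℂ, (s = 1 ∨ s = -1) ∧
      (∏ i ∈ Finset.range (n+1),
        (Matrix.det (Matrix.of fun a b : Fin (k' i + k'' i) =>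
          Sum.elim (fun j => β i j a) (fun j => γ i j a)
            (finSumFinEquiv.symm (finCongr (hkr i) b)))) ^ ((-1:ℤ)^i))
      = s *
      (∏ i ∈ Finset.range (n+1),
        (Matrix.det (Matrix.of fun a b : Fin (k' i) =>
          Sum.elim (fun j => β' i j a) (fun j => γ' i j a)
            (finSumFinEquiv.symm (finCongr (hkr' i) b)))) ^ ((-1:ℤ)^i)) *
      (∏ i ∈ Finset.range (n+1),
        (Matrix.det (Matrix.of fun a b : Fin (k'' i) =>
          Sum.elim (fun j => β'' i j a) (fun j => γ'' i j a)
            (finSumFinEquiv.symm (finCongr (hkr'' i) b)))) ^ ((-1:ℤ)^i)) := by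
  have hrr : ∀ i, r i = r' i + r'' i := by
    intro i
    induction i with
    | zero => omega
    | succ m ih => have := hkr m; have := hkr' m; have := hkr'' m; omega
  have hrn : r (n + 1) = 0 := by
    have := hkr (n + 1); have := hk'n (n + 1) (by omega); have := hk''n (n + 1) (by omega); omega
  have hL := projRight_liftedImage d (fun q w => funext (hquot q w)) hr0'' hγ''
  have hspan : ∀ i, Submodule.span ℂ (Set.range (splicedImage hrr β' (liftedImage d γ'') (i + 1)))
      = LinearMap.range (d i) := fun i =>
    span_eq_range_of_linearIndependent (d i)
      (linearIndependent_splicedImage hrr (hβli' _) (hβli'' _) (hL _))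
      (map_splicedLift d hsub hrr hγ' γ'' i)
      (by rw [finrank_range_eq d hex0 hex hr0 hkr, Fintype.card_fin])
  obtain ⟨ε, hε, hsplice⟩ := exists_sign_prod_zpow (Finset.range (n + 1)) (fun i => (-1 : ℤ) ^ i)
    fun i => det_torsionMatrix_splice (hkr' i) (hkr'' i) (hkr i) (hrr i) (hrr (i + 1)) (hL i)
  exact ⟨ε, hε, (torsion_eq_of_admissible d hex0 hex n hr0 hrn hkr hβli hspan hβ
    (map_splicedLift d hsub hrr hγ' γ'') hγ).trans hsplice⟩

/-- Multiplicativity of torsion in short exact sequences of acyclic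
complexes: let `0 → C' → C → C'' → 0` be a degreewise split short exact sequence of
acyclic finite cochain complexes over `ℂ`, realized with chosen splittings so that
`C^i = ℂ^{k' i} ⊕ ℂ^{k'' i}`, the inclusion of `C'` is the inclusion of the first
factor and is a chain map (`hsub`), and the projection to the second factor is a chain
map onto `C''` (`hquot`). Then the torsions — each computed from any admissible choice
of bases of images and lifts — satisfy `τ(C) = ± τ(C')·τ(C'')`. -/
theorem statement16
    (n : ℕ) (k' k'' r r' r'' : ℕ → ℕ)
    (hk'n : ∀ q, n < q → k' q = 0) (hk''n : ∀ q, n < q → k'' q = 0)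
    (d' : ∀ q : ℕ, ((Fin (k' q) → ℂ) →ₗ[ℂ] (Fin (k' (q+1)) → ℂ)))
    (d'' : ∀ q : ℕ, ((Fin (k'' q) → ℂ) →ₗ[ℂ] (Fin (k'' (q+1)) → ℂ)))
    (d : ∀ q : ℕ, ((Fin (k' q + k'' q) → ℂ) →ₗ[ℂ] (Fin (k' (q+1) + k'' (q+1)) → ℂ)))
    (hdd' : ∀ q, (d' (q+1)).comp (d' q) = 0)
    (hdd'' : ∀ q, (d'' (q+1)).comp (d'' q) = 0)
    (hdd : ∀ q, (d (q+1)).comp (d q) = 0)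
    (hex0' : LinearMap.ker (d' 0) = ⊥)
    (hex' : ∀ q, LinearMap.ker (d' (q+1)) = LinearMap.range (d' q))
    (hex0'' : LinearMap.ker (d'' 0) = ⊥)
    (hex'' : ∀ q, LinearMap.ker (d'' (q+1)) = LinearMap.range (d'' q))
    (hex0 : LinearMap.ker (d 0) = ⊥)
    (hex : ∀ q, LinearMap.ker (d (q+1)) = LinearMap.range (d q))
    (hsub : ∀ q (u : Fin (k' q) → ℂ),
      d q (fun x => Sum.elim u 0 (finSumFinEquiv.symm x))
        = fun x => Sum.elim (d' q u) 0 (finSumFinEquiv.symm x))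
    (hquot : ∀ q (w : Fin (k' q + k'' q) → ℂ) (a : Fin (k'' (q+1))),
      d q w (finSumFinEquiv (Sum.inr a))
        = d'' q (fun x => w (finSumFinEquiv (Sum.inr x))) a)
    (hr0' : r' 0 = 0) (hkr' : ∀ i, k' i = r' i + r' (i+1))
    (hr0'' : r'' 0 = 0) (hkr'' : ∀ i, k'' i = r'' i + r'' (i+1))
    (hr0 : r 0 = 0) (hkr : ∀ i, k' i + k'' i = r i + r (i+1))
    (β' : ∀ i, Fin (r' i) → (Fin (k' i) → ℂ))
    (γ' : ∀ i, Fin (r' (i+1)) → (Fin (k' i) → ℂ))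
    (β'' : ∀ i, Fin (r'' i) → (Fin (k'' i) → ℂ))
    (γ'' : ∀ i, Fin (r'' (i+1)) → (Fin (k'' i) → ℂ))
    (β : ∀ i, Fin (r i) → (Fin (k' i + k'' i) → ℂ))
    (γ : ∀ i, Fin (r (i+1)) → (Fin (k' i + k'' i) → ℂ))
    (hβli' : ∀ i, LinearIndependent ℂ (β' i))
    (hβli'' : ∀ i, LinearIndependent ℂ (β'' i))
    (hβli : ∀ i, LinearIndependent ℂ (β i))
    (hβ' : ∀ i, Submodule.span ℂ (Set.range (β' (i+1))) = LinearMap.range (d' i))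
    (hβ'' : ∀ i, Submodule.span ℂ (Set.range (β'' (i+1))) = LinearMap.range (d'' i))
    (hβ : ∀ i, Submodule.span ℂ (Set.range (β (i+1))) = LinearMap.range (d i))
    (hγ' : ∀ i j, d' i (γ' i j) = β' (i+1) j)
    (hγ'' : ∀ i j, d'' i (γ'' i j) = β'' (i+1) j)
    (hγ : ∀ i j, d i (γ i j) = β (i+1) j) :
    ∃ s : ℂ, (s = 1 ∨ s = -1) ∧
      (∏ i ∈ Finset.range (n+1),
        (Matrix.det (Matrix.of fun a b : Fin (k' i + k'' i) =>
          Sum.elim (fun j => β i j a) (fun j => γ i j a)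
            (finSumFinEquiv.symm (finCongr (hkr i) b)))) ^ ((-1:ℤ)^i))
      = s *
      (∏ i ∈ Finset.range (n+1),
        (Matrix.det (Matrix.of fun a b : Fin (k' i) =>
          Sum.elim (fun j => β' i j a) (fun j => γ' i j a)
            (finSumFinEquiv.symm (finCongr (hkr' i) b)))) ^ ((-1:ℤ)^i)) *
      (∏ i ∈ Finset.range (n+1),
        (Matrix.det (Matrix.of fun a b : Fin (k'' i) =>
          Sum.elim (fun j => β'' i j a) (fun j => γ'' i j a)
            (finSumFinEquiv.symm (finCongr (hkr'' i) b)))) ^ ((-1:ℤ)^i)) :=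
  statement16_general n k' k'' r r' r'' hk'n hk''n d' d'' d hex0 hex hsub hquot hr0' hkr' hr0''
    hkr'' hr0 hkr β' γ' β'' γ'' β γ hβli' hβli'' hβli hβ hγ' hγ'' hγ
end
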